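/- arXiv:1809.02757 — 6 statements merged into one kernel-verified Lean document; each statement's English description precedes it below -/
import Mathlib

section
/- Let σ ∈ ℝ with σ ≥ −1/2 and let z ∈ ℝ with z > 1. Then ∫₀^π (sin t)^{2σ+1} / (z + cos t)^{σ+1} dt ≤ 2^{σ+1/2}·π / √(z−1). -/
open Real

/-! Writing `a = σ + 1/2`, the integrand is `(sin² t)^a / (z + cos t)^(a + 1/2)`. Since
`sin² t = (1 - cos t)(1 + cos t) ≤ 2 (z + cos t)`, it is at most `2^a / √(z + cos t)`, which is
bounded by `2^a / √(z - 1)`; integrating this constant bound over `[0, π]` gives the claim. -/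

theorem sin_sq_le_two_mul_add_cos {z : ℝ} (hz : 1 ≤ z) (t : ℝ) :
    sin t ^ 2 ≤ 2 * (z + cos t) := by
  nlinarith [sin_sq_add_cos_sq t, neg_one_le_cos t, cos_le_one t]

theorem rpow_two_mul_div_rpow_add_half_le {s w m a : ℝ} (hs : 0 ≤ s) (hm : 0 < m) (hmw : m ≤ w)
    (hsw : s ^ 2 ≤ 2 * w) (ha : 0 ≤ a) :
    s ^ (2 * a) / w ^ (a + 1 / 2) ≤ 2 ^ a / √m := by
  have hw : 0 < w := hm.trans_le hmw
  have hnum : s ^ (2 * a) ≤ 2 ^ a * w ^ a := by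
    rw [rpow_mul hs, ← mul_rpow zero_le_two hw.le, rpow_two]
    exact rpow_le_rpow (by positivity) hsw ha
  have hden : w ^ (a + 1 / 2) = w ^ a * √w := by
    rw [rpow_add hw, sqrt_eq_rpow]
  calc s ^ (2 * a) / w ^ (a + 1 / 2) ≤ 2 ^ a * w ^ a / (w ^ a * √w) := by
        rw [hden]; gcongr
    _ = 2 ^ a / √w := by
        rw [mul_comm (w ^ a), mul_div_mul_right _ _ (rpow_pos_of_pos hw a).ne']
    _ ≤ 2 ^ a / √m := by gcongr

/-- For real `σ ≥ −1/2` and `z > 1`: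
`∫₀^π sin(t)^{2σ+1} / (z + cos t)^{σ+1} dt ≤ 2^{σ+1/2} π / √(z−1)`. -/
theorem sin_pow_div_cos_integral_bound_one (σ : ℝ) (hσ : -(1 / 2) ≤ σ) (z : ℝ) (hz : 1 < z) :
    ∫ t in (0 : ℝ)..Real.pi, Real.sin t ^ (2 * σ + 1) / (z + Real.cos t) ^ (σ + 1) ≤
      2 ^ (σ + 1 / 2) * Real.pi / Real.sqrt (z - 1) := by
  have hbound : ∀ t ∈ Set.uIoc 0 π,
      ‖sin t ^ (2 * σ + 1) / (z + cos t) ^ (σ + 1)‖ ≤ 2 ^ (σ + 1 / 2) / √(z - 1) := by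
    intro t ht
    rw [Set.uIoc_of_le pi_pos.le] at ht
    have hsin : 0 ≤ sin t := sin_nonneg_of_nonneg_of_le_pi ht.1.le ht.2
    have hw : z - 1 ≤ z + cos t := by linarith [neg_one_le_cos t]
    rw [norm_of_nonneg (div_nonneg (rpow_nonneg hsin _) (rpow_nonneg (by linarith) _))]
    convert rpow_two_mul_div_rpow_add_half_le hsin (sub_pos.2 hz) hw
      (sin_sq_le_two_mul_add_cos hz.le t) (by linarith : 0 ≤ σ + 1 / 2) using 3 <;> ring
  calc ∫ t in (0 : ℝ)..π, sin t ^ (2 * σ + 1) / (z + cos t) ^ (σ + 1)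
      ≤ ‖∫ t in (0 : ℝ)..π, sin t ^ (2 * σ + 1) / (z + cos t) ^ (σ + 1)‖ := le_norm_self _
    _ ≤ 2 ^ (σ + 1 / 2) / √(z - 1) * |π - 0| :=
        intervalIntegral.norm_integral_le_of_norm_le_const hbound
    _ = 2 ^ (σ + 1 / 2) * π / √(z - 1) := by
        rw [sub_zero, abs_of_pos pi_pos]; ring
end

section
/- Let σ ∈ ℝ with −1 < σ < −1/2 and let z ∈ ℝ with z > 1. Then ∫₀^π (sin t)^{2σ+1} / (z + cos t)^{σ+1} dt ≤ π / ( 2·(z−1)^{σ+1}·(σ+1) ), and in particular this improper integral converges. -/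
/-!
Since `z + cos t ≥ z - 1 > 0` and `σ + 1 > 0`, the integrand is at most
`sin t ^ p / (z - 1) ^ (σ + 1)` with `p = 2σ + 1 ∈ (-1, 0)`. By the symmetry `t ↦ π - t` it
remains to bound `∫₀^{π/2} sin t ^ p`, and Jordan's inequality `sin t ≥ 2t/π` together with
`p ≤ 0` gives `sin t ^ p ≤ (2t/π) ^ p`, whose integral over `(0, π/2)` is `π / (2 (p + 1))`.
-/

open Real MeasureTheory Set intervalIntegral

section SinRpow

variable {p : ℝ}

theorem sin_rpow_le_of_le_pi_div_two (hp : p ≤ 0) {t : ℝ} (ht₀ : 0 < t) (ht : t ≤ π / 2) :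
    sin t ^ p ≤ (2 / π * t) ^ p :=
  rpow_le_rpow_of_nonpos (by positivity) (mul_le_sin ht₀.le ht) hp

theorem intervalIntegrable_rpow_two_div_pi_mul (hp : -1 < p) :
    IntervalIntegrable (fun t => (2 / π * t) ^ p) volume 0 (π / 2) := by
  simpa using (intervalIntegrable_rpow' hp (a := 0) (b := 1)).comp_mul_left (c := 2 / π)

theorem integral_rpow_two_div_pi_mul (hp : -1 < p) :
    ∫ t in (0)..(π / 2), (2 / π * t) ^ p = π / (2 * (p + 1)) := by
  rw [integral_comp_mul_left (fun x => x ^ p) (by positivity), mul_zero,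
    show 2 / π * (π / 2) = 1 by field_simp, integral_rpow (Or.inl hp), one_rpow,
    zero_rpow (by linarith), sub_zero, smul_eq_mul]
  field_simp

theorem intervalIntegrable_sin_rpow_zero_pi_div_two (hp₁ : -1 < p) (hp₀ : p ≤ 0) :
    IntervalIntegrable (fun t => sin t ^ p) volume 0 (π / 2) := by
  refine (intervalIntegrable_rpow_two_div_pi_mul hp₁).mono_fun'
    (continuous_sin.measurable.pow_const p).aestronglyMeasurable ?_
  rw [uIoc_of_le (by positivity)]
  refine (ae_restrict_iff' measurableSet_Ioc).2 (.of_forall fun t ht => ?_)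
  have hsin : 0 ≤ sin t := sin_nonneg_of_nonneg_of_le_pi ht.1.le (by linarith [ht.2, pi_pos])
  change ‖sin t ^ p‖ ≤ (2 / π * t) ^ p
  rw [Real.norm_of_nonneg (rpow_nonneg hsin p)]
  exact sin_rpow_le_of_le_pi_div_two hp₀ ht.1 ht.2

theorem integral_sin_rpow_zero_pi_div_two_le (hp₁ : -1 < p) (hp₀ : p ≤ 0) :
    ∫ t in (0)..(π / 2), sin t ^ p ≤ π / (2 * (p + 1)) := by
  rw [← integral_rpow_two_div_pi_mul hp₁]
  exact integral_mono_on_of_le_Ioo (by positivity)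
    (intervalIntegrable_sin_rpow_zero_pi_div_two hp₁ hp₀)
    (intervalIntegrable_rpow_two_div_pi_mul hp₁)
    fun t ht => sin_rpow_le_of_le_pi_div_two hp₀ ht.1 ht.2.le

theorem intervalIntegrable_sin_rpow_pi_div_two_pi (hp₁ : -1 < p) (hp₀ : p ≤ 0) :
    IntervalIntegrable (fun t => sin t ^ p) volume (π / 2) π := by
  simpa [sin_pi_sub, show π - π / 2 = π / 2 by ring] using
    ((intervalIntegrable_sin_rpow_zero_pi_div_two hp₁ hp₀).comp_sub_left π).symm

theorem integral_sin_rpow_pi_div_two_pi (p : ℝ) :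
    ∫ t in (π / 2)..π, sin t ^ p = ∫ t in (0)..(π / 2), sin t ^ p := by
  simpa [sin_pi_sub, show π - π / 2 = π / 2 by ring] using
    integral_comp_sub_left (fun t => sin t ^ p) π (a := π / 2) (b := π)

theorem intervalIntegrable_sin_rpow (hp₁ : -1 < p) (hp₀ : p ≤ 0) :
    IntervalIntegrable (fun t => sin t ^ p) volume 0 π :=
  (intervalIntegrable_sin_rpow_zero_pi_div_two hp₁ hp₀).trans
    (intervalIntegrable_sin_rpow_pi_div_two_pi hp₁ hp₀)

theorem integral_sin_rpow_le (hp₁ : -1 < p) (hp₀ : p ≤ 0) :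
    ∫ t in (0)..π, sin t ^ p ≤ π / (p + 1) := by
  have hp : 0 < p + 1 := by linarith
  rw [← integral_add_adjacent_intervals (intervalIntegrable_sin_rpow_zero_pi_div_two hp₁ hp₀)
    (intervalIntegrable_sin_rpow_pi_div_two_pi hp₁ hp₀), integral_sin_rpow_pi_div_two_pi]
  calc _ ≤ π / (2 * (p + 1)) + π / (2 * (p + 1)) :=
        add_le_add (integral_sin_rpow_zero_pi_div_two_le hp₁ hp₀)
          (integral_sin_rpow_zero_pi_div_two_le hp₁ hp₀)
    _ = π / (p + 1) := by field_simp; ring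

end SinRpow

theorem div_rpow_add_cos_le_div_rpow_sub_one {a s z : ℝ} (ha : 0 ≤ a) (hs : 0 ≤ s) (hz : 1 < z)
    (t : ℝ) : a / (z + cos t) ^ s ≤ a / (z - 1) ^ s :=
  div_le_div_of_nonneg_left ha (rpow_pos_of_pos (by linarith) s)
    (rpow_le_rpow (by linarith) (by linarith [neg_one_le_cos t]) hs)

/-- For real `−1 < σ < −1/2` and `z > 1`, the improper integral
`∫₀^π sin(t)^{2σ+1} / (z + cos t)^{σ+1} dt` converges and is at most
`π / (2 (z−1)^{σ+1} (σ+1))`. -/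
theorem sin_pow_div_cos_integral_bound_three (σ : ℝ) (hσ₁ : -1 < σ) (hσ₂ : σ < -(1 / 2))
    (z : ℝ) (hz : 1 < z) :
    IntegrableOn (fun t : ℝ => Real.sin t ^ (2 * σ + 1) / (z + Real.cos t) ^ (σ + 1))
        (Set.Ioo 0 Real.pi) ∧
      ∫ t in Set.Ioo (0 : ℝ) Real.pi,
          Real.sin t ^ (2 * σ + 1) / (z + Real.cos t) ^ (σ + 1) ≤
        Real.pi / (2 * (z - 1) ^ (σ + 1) * (σ + 1)) := by
  have hp₁ : -1 < 2 * σ + 1 := by linarith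
  have hp₀ : 2 * σ + 1 ≤ 0 := by linarith
  have hs : 0 ≤ σ + 1 := by linarith
  have hsin : IntegrableOn (fun t => sin t ^ (2 * σ + 1) / (z - 1) ^ (σ + 1)) (Ioo 0 π) :=
    ((intervalIntegrable_sin_rpow hp₁ hp₀).1.mono_set Ioo_subset_Ioc_self).div_const _
  have hle : ∀ t ∈ Ioo 0 π, sin t ^ (2 * σ + 1) / (z + cos t) ^ (σ + 1) ≤
      sin t ^ (2 * σ + 1) / (z - 1) ^ (σ + 1) := fun t ht =>
    div_rpow_add_cos_le_div_rpow_sub_one (rpow_nonneg (sin_pos_of_pos_of_lt_pi ht.1 ht.2).le _)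
      hs hz t
  have hnonneg : ∀ t ∈ Ioo 0 π, 0 ≤ sin t ^ (2 * σ + 1) / (z + cos t) ^ (σ + 1) := fun t ht =>
    div_nonneg (rpow_nonneg (sin_pos_of_pos_of_lt_pi ht.1 ht.2).le _)
      (rpow_nonneg (by linarith [neg_one_le_cos t]) _)
  have hint : IntegrableOn (fun t => sin t ^ (2 * σ + 1) / (z + cos t) ^ (σ + 1)) (Ioo 0 π) :=
    hsin.mono' (Measurable.aestronglyMeasurable (by fun_prop))
      ((ae_restrict_iff' measurableSet_Ioo).2 (.of_forall fun t ht =>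
        (Real.norm_of_nonneg (hnonneg t ht)).trans_le (hle t ht)))
  refine ⟨hint, ?_⟩
  calc _ ≤ ∫ t in Ioo 0 π, sin t ^ (2 * σ + 1) / (z - 1) ^ (σ + 1) :=
        setIntegral_mono_on hint hsin measurableSet_Ioo hle
    _ = (∫ t in (0)..π, sin t ^ (2 * σ + 1)) / (z - 1) ^ (σ + 1) := by
        rw [MeasureTheory.integral_div, integral_of_le pi_pos.le, integral_Ioc_eq_integral_Ioo]
    _ ≤ π / (2 * σ + 1 + 1) / (z - 1) ^ (σ + 1) := by
        gcongr; exact integral_sin_rpow_le hp₁ hp₀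
    _ = π / (2 * (z - 1) ^ (σ + 1) * (σ + 1)) := by
        rw [div_div]; congr 1; ring
end

section
/- For every real a > 0, ∫₀^a ( cosh(a) − cosh(x) )^{−1/2} dx ≤ 2√2. -/
/-!
Writing `cosh a - cosh x = 2 sinh ((a + x) / 2) sinh ((a - x) / 2)` and using `t ≤ sinh t` for
`t ≥ 0` gives `cosh a - cosh x ≥ (a² - x²) / 2 ≥ a (a - x) / 2` on `[0, a]`. Hence the integrand is
at most `√(2 / a) (a - x)^{-1/2}`, whose integral over `(0, a)` is `√(2 / a) · 2√a = 2√2`.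
-/

open Real MeasureTheory Set

namespace Real

theorem cosh_sub_cosh (x y : ℝ) :
    cosh x - cosh y = 2 * sinh ((x + y) / 2) * sinh ((x - y) / 2) := by
  have hx : cosh x = cosh ((x + y) / 2 + (x - y) / 2) := by ring_nf
  have hy : cosh y = cosh ((x + y) / 2 - (x - y) / 2) := by ring_nf
  rw [hx, hy, cosh_add, cosh_sub]
  ring

theorem sq_sub_sq_div_two_le_cosh_sub_cosh {x y : ℝ} (hy : 0 ≤ y) (hyx : y ≤ x) :
    (x ^ 2 - y ^ 2) / 2 ≤ cosh x - cosh y := by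
  have hu : (x + y) / 2 ≤ sinh ((x + y) / 2) := self_le_sinh_iff.mpr (by linarith)
  have hv : (x - y) / 2 ≤ sinh ((x - y) / 2) := self_le_sinh_iff.mpr (by linarith)
  rw [cosh_sub_cosh]
  nlinarith [mul_le_mul hu hv (by linarith) (by linarith)]

end Real

theorem integrableOn_Ioo_sub_rpow {a b r : ℝ} (hr : -1 < r) :
    IntegrableOn (fun x : ℝ => (a - x) ^ r) (Ioo b a) := by
  rcases le_total b a with hba | hab
  · have h := (intervalIntegral.intervalIntegrable_rpow' (a := 0) (b := a - b) hr).comp_sub_left a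
    rw [sub_zero, sub_sub_cancel] at h
    exact (intervalIntegrable_iff_integrableOn_Ioo_of_le hba).mp h.symm
  · simp [Ioo_eq_empty_of_le hab]

theorem integral_Ioo_sub_rpow {a b r : ℝ} (hba : b ≤ a) (hr : -1 < r) :
    ∫ x in Ioo b a, (a - x) ^ r = (a - b) ^ (r + 1) / (r + 1) := by
  rw [← integral_Ioc_eq_integral_Ioo, ← intervalIntegral.integral_of_le hba,
    intervalIntegral.integral_comp_sub_left (fun y : ℝ => y ^ r) a, sub_self,
    integral_rpow (.inl hr), zero_rpow (by linarith), sub_zero]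

/-- For every real `a > 0`, `∫₀^a (cosh a − cosh x)^{−1/2} dx ≤ 2√2`,
the improper integral being convergent. -/
theorem integral_inv_sqrt_cosh_sub_cosh_le (a : ℝ) (ha : 0 < a) :
    IntegrableOn (fun x : ℝ => (Real.cosh a - Real.cosh x) ^ (-(1 / 2) : ℝ)) (Set.Ioo 0 a) ∧
      ∫ x in Set.Ioo (0 : ℝ) a, (Real.cosh a - Real.cosh x) ^ (-(1 / 2) : ℝ) ≤
        2 * Real.sqrt 2 := by
  set g : ℝ → ℝ := fun x => (a / 2) ^ (-(1 / 2) : ℝ) * (a - x) ^ (-(1 / 2) : ℝ)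
  have hg : IntegrableOn g (Ioo 0 a) := (integrableOn_Ioo_sub_rpow (by norm_num)).const_mul _
  have hle : ∀ x ∈ Ioo 0 a, (cosh a - cosh x) ^ (-(1 / 2) : ℝ) ≤ g x := by
    rintro x ⟨hx0, hxa⟩
    have hlin : a / 2 * (a - x) ≤ cosh a - cosh x := by
      nlinarith [sq_sub_sq_div_two_le_cosh_sub_cosh hx0.le hxa.le]
    calc (cosh a - cosh x) ^ (-(1 / 2) : ℝ) ≤ (a / 2 * (a - x)) ^ (-(1 / 2) : ℝ) :=
          rpow_le_rpow_of_nonpos (by positivity) hlin (by norm_num)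
      _ = g x := mul_rpow (by positivity) (by linarith)
  have hf : IntegrableOn (fun x => (cosh a - cosh x) ^ (-(1 / 2) : ℝ)) (Ioo 0 a) := by
    refine hg.mono' (by fun_prop : Measurable _).aestronglyMeasurable ?_
    filter_upwards [ae_restrict_mem measurableSet_Ioo] with x hx
    have hpos : 0 < cosh a - cosh x := sub_pos.mpr <| cosh_lt_cosh.mpr <| by
      rw [abs_of_pos hx.1, abs_of_pos ha]; exact hx.2
    rw [norm_of_nonneg (rpow_nonneg hpos.le _)]
    exact hle x hx
  refine ⟨hf, ?_⟩
  calc ∫ x in Ioo 0 a, (cosh a - cosh x) ^ (-(1 / 2) : ℝ)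
      ≤ ∫ x in Ioo 0 a, g x := setIntegral_mono_on hf hg measurableSet_Ioo hle
    _ = (a / 2) ^ (-(1 / 2) : ℝ) * (a ^ (1 / 2 : ℝ) / (1 / 2)) := by
      rw [integral_const_mul, integral_Ioo_sub_rpow ha.le (by norm_num)]
      norm_num
    _ = 2 * √2 := by
      rw [rpow_neg (by positivity), ← sqrt_eq_rpow, ← sqrt_eq_rpow, sqrt_div ha.le]
      field_simp
end

section
/- Let ν ≥ 0 and μ ≥ 0 be real and let b > 0 be real. Then ∫₀^π (sin t)^{2ν+1} · ( cosh(b) + cos(t) )^{μ − ν − 1} dt ≤ ( 2^{ν}·e^{−bν} / ( (μ+1)·(cosh(b) − 1) ) ) · ( (cosh(b)+1)^{μ+1} − (cosh(b)−1)^{μ+1} ). -/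
/-!
Write `C = cosh b` and `x = C + cos t ≥ C - 1`. Since `2 e^{-b} C = 1 + e^{-2b}`, one has
`2 e^{-b} x - sin² t = (cos t + e^{-b})² ≥ 0`, i.e. `sin² t ≤ 2 e^{-b} x`. Splitting the integrand as
`(sin² t / x)^ν · sin t · x^μ / x` therefore bounds it by `(2 e^{-b})^ν / (C - 1) · sin t · x^μ`,
and `sin t · (C + cos t)^μ` has the explicit antiderivative `-(C + cos t)^{μ+1} / (μ + 1)`.
-/

open Real Set

lemma sin_sq_le_two_mul_exp_neg_mul_cosh_add_cos (b t : ℝ) :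
    sin t ^ 2 ≤ 2 * exp (-b) * (cosh b + cos t) := by
  have hexp : exp b * exp (-b) = 1 := by rw [← exp_add, add_neg_cancel, exp_zero]
  have hsquare : 2 * exp (-b) * (cosh b + cos t) - sin t ^ 2 = (cos t + exp (-b)) ^ 2 := by
    rw [cosh_eq, sin_sq]
    linear_combination hexp
  linarith [sq_nonneg (cos t + exp (-b))]

lemma rpow_two_mul_add_one_mul_rpow_le {s x m k ν μ : ℝ} (hs : 0 ≤ s) (hm : 0 < m) (hmx : m ≤ x)
    (hsk : s ^ 2 ≤ k * x) (hν : 0 ≤ ν) :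
    s ^ (2 * ν + 1) * x ^ (μ - ν - 1) ≤ k ^ ν / m * (s * x ^ μ) := by
  have hx : 0 < x := hm.trans_le hmx
  have hsplit : s ^ (2 * ν + 1) * x ^ (μ - ν - 1) = (s ^ 2 / x) ^ ν * (s * x ^ μ) * x⁻¹ := by
    rw [rpow_add' hs (by linarith), rpow_mul hs, rpow_sub hx, rpow_sub hx, rpow_one,
      div_rpow (by positivity) hx.le, rpow_one, rpow_two]
    ring
  have hk : 0 ≤ k := nonneg_of_mul_nonneg_left ((sq_nonneg s).trans hsk) hx
  have hquot : s ^ 2 / x ≤ k := div_le_of_le_mul₀ hx.le hk hsk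
  rw [hsplit]
  calc (s ^ 2 / x) ^ ν * (s * x ^ μ) * x⁻¹
      ≤ k ^ ν * (s * x ^ μ) * m⁻¹ := by gcongr
    _ = k ^ ν / m * (s * x ^ μ) := by ring

lemma add_cos_pos {C : ℝ} (hC : 1 < C) (t : ℝ) : 0 < C + cos t := by
  linarith [neg_one_le_cos t]

lemma continuous_add_cos_rpow {C : ℝ} (hC : 1 < C) (p : ℝ) :
    Continuous fun t => (C + cos t) ^ p :=
  (continuous_const.add continuous_cos).rpow_const fun t => Or.inl (add_cos_pos hC t).ne'

lemma integral_sin_mul_add_cos_rpow {C μ : ℝ} (hC : 1 < C) (hμ : μ + 1 ≠ 0) (a b : ℝ) :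
    ∫ t in a..b, sin t * (C + cos t) ^ μ =
      ((C + cos a) ^ (μ + 1) - (C + cos b) ^ (μ + 1)) / (μ + 1) := by
  have hderiv : ∀ t ∈ uIcc a b, HasDerivAt (fun t => -(C + cos t) ^ (μ + 1) / (μ + 1))
      (sin t * (C + cos t) ^ μ) t := by
    intro t _
    have h := (((hasDerivAt_cos t).const_add C).rpow_const
      (p := μ + 1) (Or.inl (add_cos_pos hC t).ne')).neg.div_const (μ + 1)
    refine h.congr_deriv ?_
    rw [add_sub_cancel_right]
    field_simp
  have hint : IntervalIntegrable (fun t => sin t * (C + cos t) ^ μ) MeasureTheory.volume a b :=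
    (continuous_sin.mul (continuous_add_cos_rpow hC μ)).intervalIntegrable a b
  rw [intervalIntegral.integral_eq_sub_of_hasDerivAt hderiv hint]
  ring

lemma sin_rpow_mul_cosh_add_cos_rpow_le {ν μ b t : ℝ} (hν : 0 ≤ ν) (hb : b ≠ 0)
    (ht : t ∈ Icc 0 π) :
    sin t ^ (2 * ν + 1) * (cosh b + cos t) ^ (μ - ν - 1) ≤
      2 ^ ν * exp (-b * ν) / (cosh b - 1) * (sin t * (cosh b + cos t) ^ μ) := by
  have hC : 1 < cosh b := one_lt_cosh.mpr hb
  have h := rpow_two_mul_add_one_mul_rpow_le (μ := μ) (sin_nonneg_of_nonneg_of_le_pi ht.1 ht.2)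
    (sub_pos.mpr hC) (by linarith [neg_one_le_cos t])
    (sin_sq_le_two_mul_exp_neg_mul_cosh_add_cos b t) hν
  rwa [mul_rpow two_pos.le (exp_pos _).le, ← exp_mul] at h

/-- For real `ν ≥ 0`, `μ ≥ 0` and `b > 0`:
`∫₀^π sin(t)^{2ν+1} (cosh b + cos t)^{μ−ν−1} dt`
`  ≤ (2^ν e^{−bν} / ((μ+1)(cosh b − 1))) ((cosh b + 1)^{μ+1} − (cosh b − 1)^{μ+1})`. -/
theorem sin_pow_mul_cosh_add_cos_integral_le (ν μ : ℝ) (hν : 0 ≤ ν) (hμ : 0 ≤ μ)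
    (b : ℝ) (hb : 0 < b) :
    ∫ t in (0 : ℝ)..Real.pi,
        Real.sin t ^ (2 * ν + 1) * (Real.cosh b + Real.cos t) ^ (μ - ν - 1) ≤
      2 ^ ν * Real.exp (-b * ν) / ((μ + 1) * (Real.cosh b - 1)) *
        ((Real.cosh b + 1) ^ (μ + 1) - (Real.cosh b - 1) ^ (μ + 1)) := by
  have hC : 1 < cosh b := one_lt_cosh.mpr hb.ne'
  calc ∫ t in (0 : ℝ)..π, sin t ^ (2 * ν + 1) * (cosh b + cos t) ^ (μ - ν - 1)
      ≤ ∫ t in (0 : ℝ)..π, 2 ^ ν * exp (-b * ν) / (cosh b - 1) * (sin t * (cosh b + cos t) ^ μ) :=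
        intervalIntegral.integral_mono_on pi_pos.le
          (((continuous_sin.rpow_const fun _ => Or.inr (by linarith)).mul
            (continuous_add_cos_rpow hC _)).intervalIntegrable 0 π)
          ((continuous_const.mul (continuous_sin.mul
            (continuous_add_cos_rpow hC μ))).intervalIntegrable 0 π)
          fun t ht => sin_rpow_mul_cosh_add_cos_rpow_le hν hb.ne' ht
    _ = 2 ^ ν * exp (-b * ν) / (cosh b - 1) *
          (((cosh b + 1) ^ (μ + 1) - (cosh b - 1) ^ (μ + 1)) / (μ + 1)) := by
        rw [intervalIntegral.integral_const_mul, integral_sin_mul_add_cos_rpow hC (by linarith),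
          cos_zero, cos_pi, ← sub_eq_add_neg]
    _ = _ := by rw [mul_comm (μ + 1), ← div_div]; ring
end

section
/- Let K > 0, let p, q ∈ (0, ∞) with p ≠ q, and let c ∈ ℂ. Then the improper integral ∫_K^∞ (1/ρ)·cos(pρ + c)·cos(qρ + c) dρ converges; that is, there exists L ∈ ℂ such that ∫_K^T (1/ρ)·cos(pρ + c)·cos(qρ + c) dρ tends to L as T → ∞. -/
/-!
The integrand is `f ρ / ρ` with `f ρ = cos (pρ + c) cos (qρ + c)
= (cos ((p + q)ρ + 2c) + cos ((p - q)ρ)) / 2`. As `p + q` and `p - q` are nonzero, `f` has the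
primitive `G ρ = (sin ((p + q)ρ + 2c) / (p + q) + sin ((p - q)ρ) / (p - q)) / 2`, which is bounded
on the real line even though `c` is complex. Integrating by parts,
`∫_K^T f ρ / ρ = G T / T - G K / K + ∫_K^T G ρ / ρ²`, and both `G T / T` and the absolutely
convergent last integral have limits (Dirichlet's test).
-/

open Complex Filter

section DirichletTest

open MeasureTheory Set Topology

variable {E : Type*} [NormedAddCommGroup E] [NormedSpace ℝ E]

theorem integrableOn_Ioi_inv_sq_smul_of_norm_le {g : ℝ → E} {K C : ℝ} (hK : 0 < K)
    (hg : ContinuousOn g (Ioi K)) (hgC : ∀ x ∈ Ioi K, ‖g x‖ ≤ C) :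
    IntegrableOn (fun x => (x ^ 2)⁻¹ • g x) (Ioi K) := by
  have hmajorant := (integrableOn_Ioi_rpow_of_lt (by norm_num : (-2 : ℝ) < -1) hK).const_mul C
  refine hmajorant.mono' ?_ ?_
  · refine (ContinuousOn.smul ?_ hg).aestronglyMeasurable measurableSet_Ioi
    exact (continuousOn_id.pow 2).inv₀ fun x hx => pow_ne_zero 2 (hK.trans hx).ne'
  · filter_upwards [ae_restrict_mem measurableSet_Ioi] with x hx
    have hx0 : 0 < x := hK.trans hx
    rw [norm_smul, Real.rpow_neg hx0.le, mul_comm, norm_inv, norm_pow,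
      Real.norm_of_nonneg hx0.le]
    norm_cast
    exact mul_le_mul_of_nonneg_right (hgC x hx) (by positivity)

theorem exists_tendsto_integral_inv_smul_of_hasDerivAt_of_norm_le [CompleteSpace E]
    {f g : ℝ → E} {K C : ℝ} (hK : 0 < K) (hgf : ∀ x ∈ Ici K, HasDerivAt g (f x) x)
    (hf : ContinuousOn f (Ici K)) (hgC : ∀ x ∈ Ici K, ‖g x‖ ≤ C) :
    ∃ L, Tendsto (fun T => ∫ x in K..T, x⁻¹ • f x) atTop (𝓝 L) := by
  have hg : ContinuousOn g (Ici K) := fun x hx => (hgf x hx).continuousAt.continuousWithinAt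
  have hsub (T : ℝ) (hT : K ≤ T) : uIcc K T ⊆ Ici K := by
    rw [uIcc_of_le hT]
    exact Icc_subset_Ici_self
  have hinv (x : ℝ) (hx : x ∈ Ici K) : HasDerivAt (fun x : ℝ => x⁻¹) (-(x ^ 2)⁻¹) x :=
    hasDerivAt_inv (hK.trans_le hx).ne'
  have hboundary : Tendsto (fun T : ℝ => T⁻¹ • g T) atTop (𝓝 0) := by
    refine squeeze_zero_norm' ?_ (tendsto_inv_atTop_zero.const_mul C |>.trans (by simp))
    filter_upwards [eventually_ge_atTop K] with T hT
    rw [norm_smul, norm_inv, Real.norm_of_nonneg (hK.le.trans hT), mul_comm]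
    exact mul_le_mul_of_nonneg_right (hgC T hT) (inv_nonneg.2 (hK.le.trans hT))
  have hremainder := integrableOn_Ioi_inv_sq_smul_of_norm_le hK (hg.mono Ioi_subset_Ici_self)
    fun x hx => hgC x (Ioi_subset_Ici_self hx)
  refine ⟨0 - K⁻¹ • g K + ∫ x in Ioi K, (x ^ 2)⁻¹ • g x, ?_⟩
  refine ((hboundary.sub_const _).add
    (intervalIntegral_tendsto_integral_Ioi K hremainder tendsto_id)).congr' ?_
  filter_upwards [eventually_ge_atTop K] with T hT
  have hinv_integrable : IntervalIntegrable (fun x : ℝ => -(x ^ 2)⁻¹) volume K T := by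
    refine (ContinuousOn.neg ?_).intervalIntegrable
    exact (continuousOn_id.pow 2).inv₀ fun x hx => pow_ne_zero 2 (hK.trans_le (hsub T hT hx)).ne'
  rw [intervalIntegral.integral_smul_deriv_eq_deriv_smul (fun x hx => hinv x (hsub T hT hx))
    (fun x hx => hgf x (hsub T hT hx)) hinv_integrable (hf.mono (hsub T hT)).intervalIntegrable]
  simp only [neg_smul, intervalIntegral.integral_neg]
  abel

end DirichletTest

theorem Complex.two_mul_cos_mul_cos (x y : ℂ) : 2 * cos x * cos y = cos (x - y) + cos (x + y) := by
  rw [cos_sub, cos_add]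
  ring

theorem Complex.norm_sin_ofReal_add_le (x : ℝ) (d : ℂ) : ‖sin (x + d)‖ ≤ ‖sin d‖ + ‖cos d‖ := by
  rw [sin_add, ← ofReal_sin, ← ofReal_cos]
  calc ‖(Real.sin x : ℂ) * cos d + (Real.cos x : ℂ) * sin d‖
      ≤ |Real.sin x| * ‖cos d‖ + |Real.cos x| * ‖sin d‖ := by
        simpa only [norm_mul, norm_real, Real.norm_eq_abs] using
          norm_add_le ((Real.sin x : ℂ) * cos d) ((Real.cos x : ℂ) * sin d)
    _ ≤ 1 * ‖cos d‖ + 1 * ‖sin d‖ := by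
        gcongr
        · exact Real.abs_sin_le_one x
        · exact Real.abs_cos_le_one x
    _ = ‖sin d‖ + ‖cos d‖ := by ring

theorem Complex.norm_sin_mul_add_div_le (ω : ℝ) (d : ℂ) (x : ℝ) :
    ‖sin (ω * x + d) / ω‖ ≤ (‖sin d‖ + ‖cos d‖) / |ω| := by
  rw [norm_div, norm_real, Real.norm_eq_abs, ← ofReal_mul]
  gcongr
  exact norm_sin_ofReal_add_le _ d

theorem Complex.hasDerivAt_sin_mul_add_div {ω : ℝ} (hω : ω ≠ 0) (d : ℂ) (x : ℝ) :
    HasDerivAt (fun x : ℝ => sin (ω * x + d) / ω) (cos (ω * x + d)) x := by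
  have h := ((((hasDerivAt_id (x : ℂ)).const_mul (ω : ℂ)).add_const d).csin.div_const
    (ω : ℂ)).comp_ofReal
  refine h.congr_deriv ?_
  rw [id, mul_one, mul_div_cancel_right₀ _ (ofReal_ne_zero.2 hω)]

/-- For `K > 0`, distinct `p, q ∈ (0, ∞)` and `c ∈ ℂ`, the improper integral
`∫_K^∞ (1/ρ) cos(pρ + c) cos(qρ + c) dρ` converges. -/
theorem integral_inv_mul_cos_mul_cos_converges (K : ℝ) (hK : 0 < K)
    (p q : ℝ) (hp : 0 < p) (hq : 0 < q) (hpq : p ≠ q) (c : ℂ) :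
    ∃ L : ℂ, Tendsto
      (fun T : ℝ => ∫ ρ in K..T,
        (1 / (ρ : ℂ)) * Complex.cos ((p : ℂ) * (ρ : ℂ) + c) * Complex.cos ((q : ℂ) * (ρ : ℂ) + c))
      atTop (nhds L) := by
  have hsum : p + q ≠ 0 := by positivity
  have hdiff : p - q ≠ 0 := sub_ne_zero.2 hpq
  let G (x : ℝ) : ℂ :=
    (sin ((p + q : ℝ) * x + 2 * c) / (p + q : ℝ) + sin ((p - q : ℝ) * x + 0) / (p - q : ℝ)) / 2
  have hG (x : ℝ) : HasDerivAt G (cos (p * x + c) * cos (q * x + c)) x := by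
    refine (((hasDerivAt_sin_mul_add_div hsum (2 * c) x).add
      (hasDerivAt_sin_mul_add_div hdiff 0 x)).div_const 2).congr_deriv ?_
    rw [div_eq_iff two_ne_zero, mul_comm _ (2 : ℂ), ← mul_assoc, two_mul_cos_mul_cos, add_comm]
    congr 2 <;> push_cast <;> ring
  have hGC (x : ℝ) : ‖G x‖ ≤
      ((‖sin (2 * c)‖ + ‖cos (2 * c)‖) / |p + q| + (‖sin 0‖ + ‖cos 0‖) / |p - q|) / 2 := by
    rw [norm_div, Complex.norm_two]
    gcongr
    exact (norm_add_le _ _).trans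
      (add_le_add (norm_sin_mul_add_div_le _ _ x) (norm_sin_mul_add_div_le _ _ x))
  obtain ⟨L, hL⟩ := exists_tendsto_integral_inv_smul_of_hasDerivAt_of_norm_le hK
    (fun x _ => hG x) (by fun_prop) (fun x _ => hGC x)
  refine ⟨L, hL.congr fun T => intervalIntegral.integral_congr fun ρ _ => ?_⟩
  simp only [real_smul, ofReal_inv]
  ring
end

section
/- Let θ ∈ [0, 2π). Then there exists a constant M > 0 such that for every integer k ≥ 1 and every s ∈ ℂ with |s| = k + 1/2, one has |cos( (π − θ)·s )| ≤ M · |sin( π·s )|. In particular, the function s ↦ π·cos((π−θ)s)/sin(πs) is bounded on the union of the circles of radius k + 1/2 (k ≥ 1) centered at the origin. -/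
/-!
From `‖sin (x + y i)‖² = sin² x + sinh² y` one gets `‖sin z‖ ≥ |sinh (Im z)|` and
`‖sin z‖ ≥ |sin (Re z)| cosh (Im z)`, while `‖cos z‖ ≤ cosh (Im z)`. Since `|π - θ| ≤ π`, it
suffices to bound `cosh (π Im s)` by `2 ‖sin (π s)‖` on the circle `|s| = k + 1/2`. Either
`|Im s| ≥ 1/2`, and then `|sinh (π Im s)| ≥ 1` dominates `cosh (π Im s) / 2`; or `|Im s| < 1/2`,
and then `Re s` lies at distance at least `1/6` from the integers, so `|sin (π Re s)| ≥ 1/2`.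
-/

open Complex Real

namespace Real

theorem cosh_le_two_mul_abs_sinh_of_one_le {x : ℝ} (h : 1 ≤ |sinh x|) :
    cosh x ≤ 2 * |sinh x| := by
  refine le_of_sq_le_sq ?_ (by positivity)
  rw [cosh_sq, mul_pow, ← sq_abs (sinh x)]
  nlinarith

theorem one_half_le_abs_sin_pi_mul {x : ℝ} {k : ℕ} (h₁ : k + 1 / 6 ≤ |x|)
    (h₂ : |x| ≤ k + 1 / 2) : 1 / 2 ≤ |sin (π * x)| := by
  have hodd : |sin (π * x)| = |sin (π * |x|)| := by
    rcases abs_cases x with ⟨h, _⟩ | ⟨h, _⟩ <;> simp [h, sin_neg]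
  have hshift : π * |x| = π * (|x| - k) + k * π := by ring
  rw [hodd, hshift, sin_add_nat_mul_pi, abs_mul, abs_pow, abs_neg, abs_one, one_pow, one_mul,
    ← sin_pi_div_six]
  refine (sin_le_sin_of_le_of_le_pi_div_two ?_ ?_ ?_).trans (le_abs_self _)
  all_goals nlinarith [pi_pos]

end Real

namespace Complex

theorem sq_norm_sin (z : ℂ) : ‖sin z‖ ^ 2 = Real.sin z.re ^ 2 + Real.sinh z.im ^ 2 := by
  rw [sin_eq, Complex.sq_norm, normSq_apply]
  simp only [add_re, add_im, mul_re, mul_im, I_re, I_im, ← ofReal_sin, ← ofReal_cos,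
    ← ofReal_cosh, ← ofReal_sinh, ofReal_re, ofReal_im]
  linear_combination Real.sinh z.im ^ 2 * Real.sin_sq_add_cos_sq z.re +
    Real.sin z.re ^ 2 * Real.cosh_sq z.im

theorem sq_norm_cos (z : ℂ) : ‖cos z‖ ^ 2 = Real.cos z.re ^ 2 + Real.sinh z.im ^ 2 := by
  rw [cos_eq, Complex.sq_norm, normSq_apply]
  simp only [sub_re, sub_im, mul_re, mul_im, I_re, I_im, ← ofReal_sin, ← ofReal_cos,
    ← ofReal_cosh, ← ofReal_sinh, ofReal_re, ofReal_im]
  linear_combination Real.sinh z.im ^ 2 * Real.sin_sq_add_cos_sq z.re +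
    Real.cos z.re ^ 2 * Real.cosh_sq z.im

theorem norm_cos_le_cosh_im (z : ℂ) : ‖cos z‖ ≤ Real.cosh z.im := by
  refine le_of_sq_le_sq ?_ (Real.cosh_pos _).le
  rw [sq_norm_cos, Real.cosh_sq]
  nlinarith [Real.cos_sq_le_one z.re]

theorem abs_sinh_im_le_norm_sin (z : ℂ) : |Real.sinh z.im| ≤ ‖sin z‖ := by
  rw [← abs_norm, ← sq_le_sq, sq_norm_sin]
  nlinarith [sq_nonneg (Real.sin z.re)]

theorem abs_sin_re_mul_cosh_im_le_norm_sin (z : ℂ) :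
    |Real.sin z.re| * Real.cosh z.im ≤ ‖sin z‖ := by
  refine le_of_sq_le_sq ?_ (norm_nonneg _)
  rw [mul_pow, sq_abs, Real.cosh_sq, sq_norm_sin]
  nlinarith [Real.sin_sq_le_one z.re, sq_nonneg (Real.sinh z.im), sq_nonneg (Real.sin z.re)]

theorem add_one_sixth_le_abs_re {k : ℕ} (hk : 1 ≤ k) {s : ℂ} (hs : ‖s‖ = k + 1 / 2)
    (him : |s.im| < 1 / 2) : k + 1 / 6 ≤ |s.re| := by
  have hk' : (1 : ℝ) ≤ k := by exact_mod_cast hk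
  have hsq : |s.re| ^ 2 + |s.im| ^ 2 = (k + 1 / 2) ^ 2 := by
    rw [sq_abs, sq_abs, ← hs, Complex.sq_norm, normSq_apply]
    ring
  nlinarith [abs_nonneg s.re, abs_nonneg s.im]

theorem cosh_pi_mul_im_le_two_mul_norm_sin {k : ℕ} (hk : 1 ≤ k) {s : ℂ}
    (hs : ‖s‖ = k + 1 / 2) : Real.cosh (π * s.im) ≤ 2 * ‖sin (π * s)‖ := by
  have hre : (π * s : ℂ).re = π * s.re := by simp
  have him : (π * s : ℂ).im = π * s.im := by simp
  rcases le_or_gt (1 / 2) |s.im| with hlarge | hsmall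
  · have hsinh : 1 ≤ |Real.sinh (π * s.im)| := by
      rw [Real.abs_sinh, abs_mul, abs_of_pos Real.pi_pos]
      calc (1 : ℝ) ≤ π * |s.im| := by nlinarith [Real.pi_gt_three]
        _ ≤ Real.sinh (π * |s.im|) := Real.self_le_sinh_iff.2 (by positivity)
    calc Real.cosh (π * s.im) ≤ 2 * |Real.sinh (π * s.im)| :=
          Real.cosh_le_two_mul_abs_sinh_of_one_le hsinh
      _ ≤ 2 * ‖sin (π * s)‖ := by
          gcongr
          simpa only [him] using abs_sinh_im_le_norm_sin (π * s)
  · have hsin : 1 / 2 ≤ |Real.sin (π * s.re)| :=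
      Real.one_half_le_abs_sin_pi_mul (add_one_sixth_le_abs_re hk hs hsmall)
        (hs ▸ abs_re_le_norm s)
    have hprod := abs_sin_re_mul_cosh_im_le_norm_sin (π * s)
    rw [hre, him] at hprod
    nlinarith [Real.cosh_pos (π * s.im)]

theorem norm_cos_mul_le_two_mul_norm_sin_pi_mul {a : ℝ} (ha : |a| ≤ π) {k : ℕ} (hk : 1 ≤ k)
    {s : ℂ} (hs : ‖s‖ = k + 1 / 2) : ‖cos (a * s)‖ ≤ 2 * ‖sin (π * s)‖ := by
  have him : (a * s : ℂ).im = a * s.im := by simp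
  calc ‖cos (a * s)‖ ≤ Real.cosh (a * s.im) := him ▸ norm_cos_le_cosh_im _
    _ ≤ Real.cosh (π * s.im) := by
        rw [Real.cosh_le_cosh, abs_mul, abs_mul, abs_of_pos Real.pi_pos]
        gcongr
    _ ≤ 2 * ‖sin (π * s)‖ := cosh_pi_mul_im_le_two_mul_norm_sin hk hs

end Complex

/-- For `θ ∈ [0, 2π)` there is `M > 0` such that for every integer `k ≥ 1` and every
`s ∈ ℂ` with `|s| = k + 1/2`: `|cos((π−θ)s)| ≤ M |sin(πs)|`. In particular,
`s ↦ π cos((π−θ)s)/sin(πs)` is bounded on the union of the circles `|s| = k + 1/2`. -/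
theorem cos_le_mul_sin_on_circles (θ : ℝ) (hθ : θ ∈ Set.Ico 0 (2 * Real.pi)) :
    ∃ M > (0 : ℝ),
      (∀ k : ℕ, 1 ≤ k → ∀ s : ℂ, ‖s‖ = (k : ℝ) + 1 / 2 →
        ‖Complex.cos (((Real.pi : ℂ) - (θ : ℂ)) * s)‖ ≤
          M * ‖Complex.sin ((Real.pi : ℂ) * s)‖) ∧
      (∀ k : ℕ, 1 ≤ k → ∀ s : ℂ, ‖s‖ = (k : ℝ) + 1 / 2 →
        ‖(Real.pi : ℂ) * Complex.cos (((Real.pi : ℂ) - (θ : ℂ)) * s) /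
          Complex.sin ((Real.pi : ℂ) * s)‖ ≤ Real.pi * M) := by
  have hfreq : |π - θ| ≤ π := abs_le.2 ⟨by linarith [hθ.2], by linarith [hθ.1]⟩
  have hcos : ∀ k : ℕ, 1 ≤ k → ∀ s : ℂ, ‖s‖ = (k : ℝ) + 1 / 2 →
      ‖Complex.cos (((π : ℂ) - (θ : ℂ)) * s)‖ ≤ 2 * ‖Complex.sin ((π : ℂ) * s)‖ :=
    fun k hk s hs => by
      simpa using norm_cos_mul_le_two_mul_norm_sin_pi_mul hfreq hk hs
  refine ⟨2, two_pos, hcos, fun k hk s hs => ?_⟩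
  rw [norm_div, norm_mul, norm_real, Real.norm_of_nonneg Real.pi_pos.le, mul_div_assoc]
  gcongr
  exact div_le_of_le_mul₀ (norm_nonneg _) zero_le_two (hcos k hk s hs)
end
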